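/- For a fixed natural number n ≥ 1, the function r ↦ C(n+r, n+1) / (n+r) is monotone nondecreasing in r for r ≥ 1, where C denotes binomial coefficients and the quotient is taken in the rational numbers. -/

import Mathlib

/-!
Writing `m = n + r`, it suffices that `m ↦ C(m, k) / m` is monotone for every `k ≥ 1`. One step
of this is the identity `C(m, k) (m + 1) = C(m + 1, k) (m + 1 - k)` together with `m + 1 - k ≤ m`;
at `m = 0` the quotient is `0` (division by zero), below every later value.
-/

namespace Nat

theorem succ_mul_choose_le_mul_choose_succ (m : ℕ) {k : ℕ} (hk : 1 ≤ k) :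
    (m + 1) * m.choose k ≤ m * (m + 1).choose k :=
  calc (m + 1) * m.choose k = (m + 1).choose k * (m + 1 - k) := by
        rw [mul_comm, choose_mul_succ_eq]
    _ ≤ (m + 1).choose k * m := Nat.mul_le_mul_left _ (by omega)
    _ = m * (m + 1).choose k := mul_comm _ _

theorem monotone_choose_div {K : Type*} [Field K] [LinearOrder K] [IsStrictOrderedRing K]
    {k : ℕ} (hk : 1 ≤ k) : Monotone fun m : ℕ => (m.choose k : K) / m := by
  refine monotone_nat_of_le_succ fun m => ?_
  rcases m.eq_zero_or_pos with rfl | hm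
  · simp only [cast_zero, div_zero]
    positivity
  have hstep : ((m + 1) * m.choose k : K) ≤ m * (m + 1).choose k := by
    exact_mod_cast succ_mul_choose_le_mul_choose_succ m hk
  push_cast
  rw [div_le_div_iff₀ (by positivity) (by positivity)]
  linarith

end Nat

theorem choose_div_monotone_general (n : ℕ) :
    ∀ r r' : ℕ, 1 ≤ r → r ≤ r' →
      (Nat.choose (n + r) (n + 1) : ℚ) / (n + r) ≤
        (Nat.choose (n + r') (n + 1) : ℚ) / (n + r') := by
  intro r r' _ hle
  exact_mod_cast Nat.monotone_choose_div (K := ℚ) (Nat.le_add_left 1 n)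
    (Nat.add_le_add_left hle n)

/-- For fixed `n ≥ 1`, the function `r ↦ C(n+r, n+1) / (n+r)` (in `ℚ`) is monotone
nondecreasing for `r ≥ 1`. -/
theorem choose_div_monotone (n : ℕ) (hn : 1 ≤ n) :
    ∀ r r' : ℕ, 1 ≤ r → r ≤ r' →
      (Nat.choose (n + r) (n + 1) : ℚ) / (n + r) ≤
        (Nat.choose (n + r') (n + 1) : ℚ) / (n + r') :=
  choose_div_monotone_general n
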